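/- arXiv:2505.17976 — 6 statements merged into one kernel-verified Lean document; each statement's English description precedes it below -/
import Mathlib

section
/- Let (X,d) be a metric space and let (μₙ)_{n∈ℕ} be a sequentially tight sequence of Borel probability measures on X. Then (μₙ)_{n∈ℕ} is precompact in the topology of weak convergence, i.e. it admits a weakly convergent subsequence. -/
/-!
The proof has two steps.

Sequential tightness implies asymptotic tightness: for every `ε` there is a single compact set `C`
with `liminf μₙ (C^ρ) ≥ 1 - ε` for all `ρ > 0`. Take the complete set `L` attached to a small
level, compacts `Kⱼ` from smaller and smaller levels `ηⱼ` at radii `dⱼ → 0`, and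
`C = L ∩ ⋂ⱼ cthickening dⱼ Kⱼ`; it is closed in `L` and totally bounded, hence compact. A
compactness argument shows that each `C^ρ` contains a finite stage `L^{d_J} ∩ ⋂_{j<J} Kⱼ^{dⱼ}`,
whose mass is eventually at least `1 - ∑ ηᵢ`.

An asymptotically tight sequence has a weakly convergent subsequence, without completeness or
separability of `X`. The compacts `C_m` witnessing asymptotic tightness lie in the closure of a
countable set `D`, and along a diagonal subsequence the masses of all finite unions of closed balls
with centres in `D` and rational radii converge. The supremum `β G` of these limits over such
unions inside `G` is superadditive on disjoint sets, so the outer measure induced by `β` on open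
sets is a metric outer measure and yields a Borel measure `ν` with
`ν G ≤ β G ≤ liminf μₙ G` for open `G`. Covering the `C_m` by finitely many balls shows
`ν X = 1`, and the portmanteau theorem concludes.
-/

open MeasureTheory Filter Topology Metric Set
open scoped ENNReal

lemma IsComplete.inter_isClosed {α : Type*} [UniformSpace α] {s t : Set α} (hs : IsComplete s)
    (ht : IsClosed t) : IsComplete (s ∩ t) := by
  intro f hf hfst
  obtain ⟨x, hxs, hfx⟩ := hs f hf (hfst.trans (principal_mono.2 inter_subset_left))
  have hxt : x ∈ closure t := mem_closure_iff_clusterPt.2 <|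
    hf.1.mono (le_inf hfx (hfst.trans (principal_mono.2 inter_subset_right)))
  exact ⟨x, ⟨hxs, ht.closure_eq ▸ hxt⟩, hfx⟩

lemma exists_subseq_tendsto_pi {ι : Type*} [Countable ι] (u : ℕ → ι → ℝ≥0∞) :
    ∃ ψ : ℕ → ℕ, StrictMono ψ ∧ ∃ g : ι → ℝ≥0∞,
      ∀ i, Tendsto (fun k => u (ψ k) i) atTop (𝓝 (g i)) := by
  obtain ⟨g, -, ψ, hψ, hg⟩ := isCompact_univ.tendsto_subseq (x := u) fun _ => mem_univ _
  exact ⟨ψ, hψ, g, tendsto_pi_nhds.1 hg⟩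

lemma ENNReal.one_le_of_forall_one_sub_inv_le {a : ℝ≥0∞} (h : ∀ n : ℕ, 1 - (n : ℝ≥0∞)⁻¹ ≤ a) :
    1 ≤ a := by
  refine le_of_forall_lt fun c hc => ?_
  obtain ⟨n, hn⟩ := ENNReal.exists_inv_nat_lt (tsub_pos_of_lt hc).ne'
  exact (lt_tsub_comm.1 hn).trans_le (h n)

section

variable {X : Type*}

lemma eventually_measure_compl_inter_biInter_le [MeasurableSpace X] {μ : ℕ → Measure X}
    {s : Set X} {B : ℕ → Set X} {η : ℕ → ℝ≥0∞} (hs : ∀ᶠ n in atTop, μ n sᶜ ≤ η 0)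
    (hB : ∀ j, ∀ᶠ n in atTop, μ n (B j)ᶜ ≤ η (j + 1)) (J : ℕ) :
    ∀ᶠ n in atTop, μ n (s ∩ ⋂ j ∈ Finset.range J, B j)ᶜ ≤ ∑' i, η i := by
  filter_upwards [hs, (Finset.range J).eventually_all.2 fun j _ => hB j] with n hsn hBn
  calc μ n (s ∩ ⋂ j ∈ Finset.range J, B j)ᶜ
      ≤ μ n sᶜ + ∑ j ∈ Finset.range J, μ n (B j)ᶜ := by
        rw [compl_inter, compl_iInter₂]
        exact (measure_union_le _ _).trans (add_le_add le_rfl (measure_biUnion_finset_le _ _))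
    _ ≤ η 0 + ∑ j ∈ Finset.range J, η (j + 1) := add_le_add hsn (Finset.sum_le_sum hBn)
    _ = ∑ i ∈ Finset.range (J + 1), η i := by rw [Finset.sum_range_succ', add_comm]
    _ ≤ ∑' i, η i := ENNReal.sum_le_tsum _

section ProbabilityMeasures

variable [MeasurableSpace X] {μ : ℕ → Measure X} [∀ n, IsProbabilityMeasure (μ n)]

lemma eventually_measure_compl_lt {s : Set X} (hs : MeasurableSet s) {η : ℝ} {c : ℝ≥0∞}
    (hc : ENNReal.ofReal η < c) (h : ENNReal.ofReal (1 - η) ≤ liminf (fun n => μ n s) atTop) :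
    ∀ᶠ n in atTop, μ n sᶜ < c := by
  refine eventually_lt_of_limsup_lt (lt_of_le_of_lt ?_ hc)
  calc limsup (fun n => μ n sᶜ) atTop = limsup (fun n => 1 - μ n s) atTop := by
        simp_rw [prob_compl_eq_one_sub hs]
    _ = 1 - liminf (fun n => μ n s) atTop := ENNReal.limsup_const_sub _ _ ENNReal.one_ne_top
    _ ≤ 1 - ENNReal.ofReal (1 - η) := tsub_le_tsub_left h 1
    _ ≤ ENNReal.ofReal η := by
        rw [tsub_le_iff_right, ← ENNReal.ofReal_one]
        simpa using ENNReal.ofReal_add_le (p := η) (q := 1 - η)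

lemma le_liminf_measure_of_eventually_compl_le {s : Set X} (hs : MeasurableSet s) {c : ℝ≥0∞}
    (h : ∀ᶠ n in atTop, μ n sᶜ ≤ c) : 1 - c ≤ liminf (fun n => μ n s) atTop := by
  refine le_liminf_of_le (by isBoundedDefault) (h.mono fun n hn => ?_)
  calc 1 - c ≤ 1 - μ n sᶜ := tsub_le_tsub_left hn 1
    _ = μ n s := by rw [← prob_compl_eq_one_sub hs.compl, compl_compl]

end ProbabilityMeasures

section PseudoMetric

variable [PseudoMetricSpace X]

lemma totallyBounded_of_forall_subset_thickening {s : Set X}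
    (h : ∀ r > 0, ∃ K, TotallyBounded K ∧ s ⊆ thickening r K) : TotallyBounded s := by
  refine Metric.totallyBounded_iff.2 fun ε hε => ?_
  obtain ⟨K, hK, hsK⟩ := h (ε / 2) (half_pos hε)
  obtain ⟨t, ht, hKt⟩ := Metric.totallyBounded_iff.1 hK (ε / 2) (half_pos hε)
  refine ⟨t, ht, fun z hz => ?_⟩
  obtain ⟨k, hk, hzk⟩ := mem_thickening_iff.1 (hsK hz)
  obtain ⟨y, hy, hky⟩ := mem_iUnion₂.1 (hKt hk)
  exact mem_iUnion₂.2 ⟨y, hy, (dist_triangle z k y).trans_lt (by linarith [mem_ball.1 hky])⟩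

lemma exists_subset_thickening_of_forall_exists_tendsto {A : ℕ → Set X} {T : Set X}
    (hA : ∀ x : ℕ → X, (∀ J, x J ∈ A J) →
      ∃ y ∈ T, ∃ σ : ℕ → ℕ, StrictMono σ ∧ Tendsto (x ∘ σ) atTop (𝓝 y))
    {ρ : ℝ} (hρ : 0 < ρ) : ∃ J, A J ⊆ thickening ρ T := by
  by_contra! hnot
  choose x hxA hxT using fun J => not_subset.1 (hnot J)
  obtain ⟨y, hyT, σ, -, hσ⟩ := hA x hxA
  obtain ⟨i, hi⟩ := (hσ.eventually (ball_mem_nhds y hρ)).exists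
  exact hxT (σ i) (mem_thickening_iff.2 ⟨y, hyT, hi⟩)

lemma isCompact_inter_iInter_cthickening {L : Set X} {K : ℕ → Set X} {d : ℕ → ℝ}
    (hL : IsComplete L) (hK : ∀ j, TotallyBounded (K j)) (hd : Tendsto d atTop (𝓝 0)) :
    IsCompact (L ∩ ⋂ j, cthickening (d j) (K j)) := by
  refine TotallyBounded.isCompact_of_isComplete ?_
    (hL.inter_isClosed (isClosed_iInter fun _ => isClosed_cthickening))
  refine totallyBounded_of_forall_subset_thickening fun r hr => ?_
  obtain ⟨j, hj⟩ := (hd.eventually (gt_mem_nhds hr)).exists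
  exact ⟨K j, hK j, fun x hx => cthickening_subset_thickening' hr hj _ (mem_iInter.1 hx.2 j)⟩

end PseudoMetric

section Metric

variable [MetricSpace X]

lemma exists_tendsto_subseq_of_mem_thickening {L : Set X} {K : ℕ → Set X} {d : ℕ → ℝ}
    (hL : IsComplete L) (hK : ∀ j, TotallyBounded (K j)) (hd_anti : Antitone d)
    (hd : Tendsto d atTop (𝓝 0)) {x : ℕ → X}
    (hx : ∀ J, x J ∈ thickening (d J) L ∩ ⋂ j ∈ Finset.range J, thickening (d j) (K j)) :
    ∃ y ∈ L ∩ ⋂ j, cthickening (d j) (K j), ∃ σ : ℕ → ℕ, StrictMono σ ∧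
      Tendsto (x ∘ σ) atTop (𝓝 y) := by
  choose a haL hxa using fun J => mem_thickening_iff.1 (hx J).1
  have hxK : ∀ j J, j < J → x J ∈ thickening (d j) (K j) := fun j J hjJ =>
    mem_iInter₂.1 (hx J).2 j (Finset.mem_range.2 hjJ)
  have ha_bdd : TotallyBounded (range a) := by
    refine totallyBounded_of_forall_subset_thickening fun r hr => ?_
    obtain ⟨j, hj⟩ := (hd.eventually (gt_mem_nhds (half_pos hr))).exists
    refine ⟨K j ∪ a '' Iic j, (hK j).union ((finite_Iic j).image a).totallyBounded, ?_⟩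
    rintro _ ⟨J, rfl⟩
    rcases le_or_gt J j with hJ | hJ
    · exact self_subset_thickening hr _ (Or.inr (mem_image_of_mem a hJ))
    obtain ⟨k, hk, hxk⟩ := mem_thickening_iff.1 (hxK j J hJ)
    refine mem_thickening_iff.2 ⟨k, Or.inl hk, ?_⟩
    linarith [dist_triangle (a J) (x J) k, dist_comm (a J) (x J), hxa J, hd_anti hJ.le]
  have ha_sub : closure (range a) ⊆ L := closure_minimal (range_subset_iff.2 haL) hL.isClosed
  have ha_compact : IsCompact (closure (range a)) := by
    refine ha_bdd.closure.isCompact_of_isComplete ?_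
    simpa [inter_eq_right.2 ha_sub] using hL.inter_isClosed (isClosed_closure (s := range a))
  obtain ⟨y, hy, σ, hσ, hay⟩ :=
    ha_compact.tendsto_subseq fun J => subset_closure (mem_range_self J)
  have hxy : Tendsto (x ∘ σ) atTop (𝓝 y) := by
    refine hay.congr_dist (squeeze_zero (fun _ => dist_nonneg) (fun i => ?_)
      (hd.comp hσ.tendsto_atTop))
    rw [dist_comm]
    exact (hxa (σ i)).le
  refine ⟨y, ⟨ha_sub hy, mem_iInter.2 fun j => ?_⟩, σ, hσ, hxy⟩
  refine closure_thickening_subset_cthickening _ _ (mem_closure_of_tendsto hxy ?_)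
  filter_upwards [eventually_gt_atTop j] with i hi
  exact hxK j (σ i) (hi.trans_le hσ.le_apply)

lemma Metric.AreSeparated.exists_disjoint_thickening {s t : Set X} (h : AreSeparated s t) :
    ∃ δ > 0, Disjoint (thickening δ s) (thickening δ t) := by
  obtain ⟨r, hr0, hr⟩ := h
  obtain ⟨δ, hδ0, hδr⟩ := ENNReal.lt_iff_exists_nnreal_btwn.1 (pos_iff_ne_zero.2 hr0)
  refine ⟨δ / 2, half_pos (by exact_mod_cast hδ0), disjoint_left.2 fun z hzs hzt => ?_⟩
  obtain ⟨x, hx, hzx⟩ := mem_thickening_iff.1 hzs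
  obtain ⟨y, hy, hzy⟩ := mem_thickening_iff.1 hzt
  have hxy : dist x y < δ := by linarith [dist_triangle_left x y z]
  have := (hr x hx y hy).trans_lt (edist_lt_ofReal.2 hxy)
  rw [ENNReal.ofReal_coe_nnreal] at this
  exact this.not_ge hδr.le

/-- Superadditivity of `β` on disjoint open sets splits any open cover of two metrically separated
sets along disjoint thickenings of them. -/
theorem isMetric_inducedOuterMeasure_isOpen (β : Set X → ℝ≥0∞) (hβ0 : β ∅ = 0)
    (hβ : ∀ U V W, IsOpen U → IsOpen V → IsOpen W → Disjoint U V → U ⊆ W → V ⊆ W →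
      β U + β V ≤ β W) :
    (inducedOuterMeasure (fun U (_ : IsOpen U) => β U) isOpen_empty hβ0).IsMetric := by
  set m := extend fun U (_ : IsOpen U) => β U
  set μo := inducedOuterMeasure (fun U (_ : IsOpen U) => β U) isOpen_empty hβ0
  have hμo : ∀ s, μo s = ⨅ (U : ℕ → Set X) (_ : s ⊆ ⋃ n, U n), ∑' n, m (U n) :=
    OuterMeasure.ofFunction_apply _ _
  have hm_split : ∀ A U V, IsOpen U → IsOpen V → Disjoint U V →
      m (A ∩ U) + m (A ∩ V) ≤ m A := by
    intro A U V hU hV hUV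
    simp only [m]
    by_cases hA : IsOpen A
    · rw [extend_eq _ (hA.inter hU), extend_eq _ (hA.inter hV), extend_eq _ hA]
      exact hβ _ _ _ (hA.inter hU) (hA.inter hV) hA
        (hUV.mono inter_subset_right inter_subset_right) inter_subset_left inter_subset_left
    · rw [extend_eq_top _ hA]
      exact le_top
  intro S T hST
  refine le_antisymm (measure_union_le S T) ?_
  obtain ⟨δ, hδ, hST'⟩ := hST.exists_disjoint_thickening
  rw [hμo (S ∪ T)]
  refine le_iInf₂ fun U hU => ?_
  have hcov : ∀ S' ⊆ S ∪ T, μo S' ≤ ∑' n, m (U n ∩ thickening δ S') := fun S' hS' => by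
    rw [hμo]
    refine iInf₂_le _ ?_
    rw [← iUnion_inter]
    exact subset_inter (hS'.trans hU) (self_subset_thickening hδ S')
  calc μo S + μo T ≤ ∑' n, m (U n ∩ thickening δ S) + ∑' n, m (U n ∩ thickening δ T) :=
        add_le_add (hcov S subset_union_left) (hcov T subset_union_right)
    _ = ∑' n, (m (U n ∩ thickening δ S) + m (U n ∩ thickening δ T)) := ENNReal.tsum_add.symm
    _ ≤ ∑' n, m (U n) := ENNReal.tsum_le_tsum fun n =>
        hm_split _ _ _ isOpen_thickening isOpen_thickening hST'

theorem exists_measure_le_of_superadditive [MeasurableSpace X] [BorelSpace X]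
    (β : Set X → ℝ≥0∞) (hβ0 : β ∅ = 0)
    (hβ : ∀ U V W, IsOpen U → IsOpen V → IsOpen W → Disjoint U V → U ⊆ W → V ⊆ W →
      β U + β V ≤ β W) :
    ∃ ν : Measure X, (∀ U, IsOpen U → ν U ≤ β U) ∧
      ∀ s, MeasurableSet s → ∀ c, (∀ U : ℕ → Set X, (∀ n, IsOpen (U n)) → s ⊆ ⋃ n, U n →
        c ≤ ∑' n, β (U n)) → c ≤ ν s := by
  set μo := inducedOuterMeasure (fun U (_ : IsOpen U) => β U) isOpen_empty hβ0
  have hcar : ‹MeasurableSpace X› ≤ μo.caratheodory := BorelSpace.measurable_eq (α := X) ▸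
    (isMetric_inducedOuterMeasure_isOpen β hβ0 hβ).borel_le_caratheodory
  refine ⟨μo.toMeasure hcar, fun U hU => ?_, fun s hs c hc => ?_⟩
  · rw [toMeasure_apply _ _ hU.measurableSet, ← extend_eq (fun U (_ : IsOpen U) => β U) hU]
    exact OuterMeasure.ofFunction_le U
  · rw [toMeasure_apply _ _ hs]
    refine le_iInf₂ fun U hU => ?_
    by_cases hUo : ∀ n, IsOpen (U n)
    · simpa only [extend_eq _ (hUo _)] using hc U hUo hU
    · obtain ⟨n, hn⟩ := not_forall.1 hUo
      exact le_top.trans ((extend_eq_top _ hn) ▸ ENNReal.le_tsum n)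

end Metric

section BallUnions

variable [MetricSpace X] {D : Set X}

def ballUnion (s : Finset (D × ℚ)) : Set X := ⋃ p ∈ s, closedBall (p.1 : X) p.2

lemma isClosed_ballUnion (s : Finset (D × ℚ)) : IsClosed (ballUnion s) :=
  s.finite_toSet.isClosed_biUnion fun _ _ => isClosed_closedBall

lemma ballUnion_union [DecidableEq D] (s t : Finset (D × ℚ)) :
    ballUnion (s ∪ t) = ballUnion s ∪ ballUnion t :=
  Finset.set_biUnion_union s t _

lemma exists_thickening_subset_biUnion_ballUnion {C : Set X} (hC : IsCompact C)
    (hCD : C ⊆ closure D) {U : ℕ → Set X} (hU : ∀ n, IsOpen (U n)) (hCU : C ⊆ ⋃ n, U n) :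
    ∃ ρ > 0, ∃ N : Finset ℕ, ∃ t : ℕ → Finset (D × ℚ),
      thickening ρ C ⊆ ⋃ n ∈ N, ballUnion (t n) ∧ ∀ n, ballUnion (t n) ⊆ U n := by
  classical
  obtain ⟨δ, hδ, hleb⟩ := lebesgue_number_lemma_of_metric hC hU hCU
  obtain ⟨q, hq0, hqδ⟩ := exists_rat_btwn (half_pos hδ)
  have hq4 : (0 : ℝ) < q / 4 := by positivity
  obtain ⟨F, hF⟩ := hC.elim_finite_subcover (fun x : C => ball (x : X) (q / 4))
    (fun _ => isOpen_ball) fun x hx => mem_iUnion.2 ⟨⟨x, hx⟩, mem_ball_self hq4⟩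
  choose y hyD hy using fun x : C => Metric.mem_closure_iff.1 (hCD x.2) _ hq4
  choose n hn using fun x : C => hleb x x.2
  -- the balls around `y x` for `x ∈ F`, grouped by the index `n x` of a set containing `ball x δ`
  let t m : Finset (D × ℚ) := (F.filter (n · = m)).image fun x => (⟨y x, hyD x⟩, q)
  refine ⟨q / 4, hq4, F.image n, t, fun z hz => ?_, fun m z hz => ?_⟩
  · obtain ⟨c, hc, hzc⟩ := mem_thickening_iff.1 hz
    obtain ⟨x, hxF, hcx⟩ := mem_iUnion₂.1 (hF hc)
    refine mem_iUnion₂.2 ⟨n x, Finset.mem_image_of_mem n hxF, mem_iUnion₂.2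
      ⟨(⟨y x, hyD x⟩, q), Finset.mem_image_of_mem _ (Finset.mem_filter.2 ⟨hxF, rfl⟩), ?_⟩⟩
    rw [mem_closedBall]
    linarith [dist_triangle4 z c x (y x), mem_ball.1 hcx, hy x]
  · obtain ⟨p, hp, hzp⟩ := mem_iUnion₂.1 hz
    obtain ⟨x, hx, rfl⟩ := Finset.mem_image.1 hp
    obtain ⟨-, rfl⟩ := Finset.mem_filter.1 hx
    refine hn x (mem_ball.2 ?_)
    linarith [dist_triangle z (y x) x, mem_closedBall.1 hzp, dist_comm (x : X) (y x), hy x]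

variable [MeasurableSpace X] {ν : ℕ → Measure X} {g : Finset (D × ℚ) → ℝ≥0∞}

noncomputable def innerBallLimit (g : Finset (D × ℚ) → ℝ≥0∞) (G : Set X) : ℝ≥0∞ :=
  ⨆ (s : Finset (D × ℚ)) (_ : ballUnion s ⊆ G), g s

lemma innerBallLimit_le_liminf (hg : ∀ s, Tendsto (fun k => ν k (ballUnion s)) atTop (𝓝 (g s)))
    (G : Set X) : innerBallLimit g G ≤ liminf (fun k => ν k G) atTop :=
  iSup₂_le fun s hs => (hg s).liminf_eq ▸
    liminf_le_liminf (Eventually.of_forall fun k => measure_mono hs)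

lemma innerBallLimit_empty (hg : ∀ s, Tendsto (fun k => ν k (ballUnion s)) atTop (𝓝 (g s))) :
    innerBallLimit g (∅ : Set X) = 0 :=
  le_antisymm ((innerBallLimit_le_liminf hg ∅).trans (by simp)) bot_le

lemma innerBallLimit_add_le [OpensMeasurableSpace X]
    (hg : ∀ s, Tendsto (fun k => ν k (ballUnion s)) atTop (𝓝 (g s)))
    {U V W : Set X} (hUV : Disjoint U V) (hUW : U ⊆ W) (hVW : V ⊆ W) :
    innerBallLimit g U + innerBallLimit g V ≤ innerBallLimit g W := by
  classical
  refine ENNReal.biSup_add_biSup_le' ⟨∅, by simp [ballUnion]⟩ ⟨∅, by simp [ballUnion]⟩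
    fun s hs t ht => ?_
  have hst : g (s ∪ t) = g s + g t := by
    refine tendsto_nhds_unique (hg (s ∪ t)) ?_
    simp_rw [ballUnion_union, measure_union (hUV.mono hs ht) (isClosed_ballUnion t).measurableSet]
    exact (hg s).add (hg t)
  have hstW : ballUnion (s ∪ t) ⊆ W := by
    rw [ballUnion_union]
    exact union_subset (hs.trans hUW) (ht.trans hVW)
  exact hst ▸ le_iSup₂_of_le (s ∪ t) hstW le_rfl

lemma le_tsum_innerBallLimit (hg : ∀ s, Tendsto (fun k => ν k (ballUnion s)) atTop (𝓝 (g s)))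
    {C : Set X} (hC : IsCompact C) (hCD : C ⊆ closure D) {c : ℝ≥0∞}
    (hCc : ∀ ρ > 0, c ≤ liminf (fun k => ν k (thickening ρ C)) atTop)
    {U : ℕ → Set X} (hU : ∀ n, IsOpen (U n)) (hCU : C ⊆ ⋃ n, U n) :
    c ≤ ∑' n, innerBallLimit g (U n) := by
  obtain ⟨ρ, hρ, N, t, hCt, htU⟩ := exists_thickening_subset_biUnion_ballUnion hC hCD hU hCU
  calc c ≤ liminf (fun k => ν k (thickening ρ C)) atTop := hCc ρ hρ
    _ ≤ liminf (fun k => ∑ n ∈ N, ν k (ballUnion (t n))) atTop :=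
        liminf_le_liminf (Eventually.of_forall fun k =>
          (measure_mono hCt).trans (measure_biUnion_finset_le _ _))
    _ = ∑ n ∈ N, g (t n) := (tendsto_finsetSum _ fun n _ => hg (t n)).liminf_eq
    _ ≤ ∑ n ∈ N, innerBallLimit g (U n) :=
        Finset.sum_le_sum fun n _ => le_iSup₂_of_le (t n) (htU n) le_rfl
    _ ≤ ∑' n, innerBallLimit g (U n) := ENNReal.sum_le_tsum _

end BallUnions

section Tightness

variable [MetricSpace X] [MeasurableSpace X]

def IsSeqTight (μ : ℕ → Measure X) : Prop :=
  ∀ ε : ℝ, 0 < ε → ∃ K : ℝ → Set X,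
    (∀ δ : ℝ, 0 < δ → IsCompact (K δ)) ∧
    (∀ δ : ℝ, 0 < δ →
      ENNReal.ofReal (1 - ε) ≤ liminf (fun n => μ n (thickening δ (K δ))) atTop) ∧
    IsComplete (closure (⋃ δ ∈ Ioi (0 : ℝ), K δ))

def IsAsymptoticallyTight (μ : ℕ → Measure X) : Prop :=
  ∀ ε : ℝ≥0∞, ε ≠ 0 → ∃ C, IsCompact C ∧
    ∀ ρ : ℝ, 0 < ρ → 1 - ε ≤ liminf (fun n => μ n (thickening ρ C)) atTop

lemma IsAsymptoticallyTight.comp_tendsto {μ : ℕ → Measure X} (h : IsAsymptoticallyTight μ)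
    {φ : ℕ → ℕ} (hφ : Tendsto φ atTop atTop) : IsAsymptoticallyTight (fun n => μ (φ n)) :=
  fun ε hε =>
    let ⟨C, hC, hCμ⟩ := h ε hε
    ⟨C, hC, fun ρ hρ => (hCμ ρ hρ).trans (hφ.liminf_le_liminf_comp (u := fun n => μ n _))⟩

theorem IsSeqTight.isAsymptoticallyTight [OpensMeasurableSpace X] {μ : ℕ → Measure X}
    [∀ n, IsProbabilityMeasure (μ n)] (h : IsSeqTight μ) : IsAsymptoticallyTight μ := by
  intro ε hε
  obtain ⟨d, hd_anti, hd_pos, hd⟩ := exists_seq_strictAnti_tendsto (0 : ℝ)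
  obtain ⟨η, hη_pos, hη_sum⟩ := ENNReal.exists_pos_sum_of_countable hε ℕ
  choose K hK_compact hK_mass hK_complete using fun i => h (η i / 2) (by positivity [hη_pos i])
  -- `L` carries the level `η 0`, the compact `Kj j` the level `η (j + 1)`
  set L := closure (⋃ δ ∈ Ioi (0 : ℝ), K 0 δ)
  set Kj := fun j => K (j + 1) (d j)
  have hKj : ∀ j, TotallyBounded (Kj j) := fun j =>
    (hK_compact (j + 1) (d j) (hd_pos j)).totallyBounded
  refine ⟨L ∩ ⋂ j, cthickening (d j) (Kj j),
    isCompact_inter_iInter_cthickening (hK_complete 0) hKj hd, fun ρ hρ => ?_⟩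
  obtain ⟨J, hJ⟩ := exists_subset_thickening_of_forall_exists_tendsto (fun x hx =>
    exists_tendsto_subseq_of_mem_thickening (hK_complete 0) hKj hd_anti.antitone hd hx) hρ
  have hmass : ∀ i, ∀ δ > 0, ∀ᶠ n in atTop, μ n (thickening δ (K i δ))ᶜ < η i := by
    intro i δ hδ
    refine eventually_measure_compl_lt isOpen_thickening.measurableSet ?_ (hK_mass i δ hδ)
    rw [← ENNReal.ofReal_coe_nnreal]
    exact (ENNReal.ofReal_lt_ofReal_iff (hη_pos i)).2 (half_lt_self (hη_pos i))
  have hKL : K 0 (d J) ⊆ L :=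
    (subset_biUnion_of_mem (u := fun δ => K 0 δ) (mem_Ioi.2 (hd_pos J))).trans subset_closure
  have hA := eventually_measure_compl_inter_biInter_le (η := fun i => (η i : ℝ≥0∞))
    ((hmass 0 (d J) (hd_pos J)).mono fun n hn =>
      (measure_mono (compl_subset_compl.2 (thickening_subset_of_subset _ hKL))).trans hn.le)
    (fun j => (hmass (j + 1) (d j) (hd_pos j)).mono fun n hn => hn.le) J
  calc 1 - ε ≤ 1 - ∑' i, (η i : ℝ≥0∞) := tsub_le_tsub_left hη_sum.le 1
    _ ≤ liminf (fun n => μ n (thickening (d J) L ∩ ⋂ j ∈ Finset.range J,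
        thickening (d j) (Kj j))) atTop :=
        le_liminf_measure_of_eventually_compl_le (isOpen_thickening.inter
          (isOpen_biInter_finset fun _ _ => isOpen_thickening)).measurableSet hA
    _ ≤ liminf (fun n => μ n (thickening ρ _)) atTop :=
        liminf_le_liminf (Eventually.of_forall fun n => measure_mono hJ)

theorem IsAsymptoticallyTight.exists_subseq_tendsto [BorelSpace X] {μ : ℕ → ProbabilityMeasure X}
    (h : IsAsymptoticallyTight (fun n => (μ n : Measure X))) :
    ∃ ψ : ℕ → ℕ, StrictMono ψ ∧ ∃ ν : ProbabilityMeasure X,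
      Tendsto (fun k => μ (ψ k)) atTop (𝓝 ν) := by
  choose C hC hCμ using fun n : ℕ =>
    h (n : ℝ≥0∞)⁻¹ (ENNReal.inv_ne_zero.2 (ENNReal.natCast_ne_top n))
  obtain ⟨D, hD, hCD⟩ := TopologicalSpace.IsSeparable.iUnion fun n => (hC n).isSeparable
  have := hD.to_subtype
  obtain ⟨ψ, hψ, g, hg⟩ :=
    exists_subseq_tendsto_pi fun k (s : Finset (D × ℚ)) => (μ k : Measure X) (ballUnion s)
  obtain ⟨ν, hνβ, hν_lower⟩ := exists_measure_le_of_superadditive (innerBallLimit g)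
    (innerBallLimit_empty hg) fun U V W _ _ _ => innerBallLimit_add_le hg
  have hν_open : ∀ U, IsOpen U → ν U ≤ liminf (fun k => (μ (ψ k) : Measure X) U) atTop :=
    fun U hU => (hνβ U hU).trans (innerBallLimit_le_liminf hg U)
  have hν_univ : ν univ = 1 := by
    refine le_antisymm ((hν_open univ isOpen_univ).trans (by simp)) ?_
    refine ENNReal.one_le_of_forall_one_sub_inv_le fun n => ?_
    refine hν_lower univ MeasurableSet.univ _ fun U hU hUuniv => ?_
    exact le_tsum_innerBallLimit hg (hC n) ((subset_iUnion C n).trans hCD)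
      (fun ρ hρ => (hCμ n ρ hρ).trans (hψ.tendsto_atTop.liminf_le_liminf_comp
        (u := fun k => (μ k : Measure X) _))) hU ((subset_univ _).trans hUuniv)
  exact ⟨ψ, hψ, ⟨ν, ⟨hν_univ⟩⟩, tendsto_of_forall_isOpen_le_liminf' hν_open⟩

end Tightness

end

/-- Let `(X,d)` be a metric space and `(μₙ)` a sequentially tight sequence of
Borel probability measures on `X`.  Then `(μₙ)` is precompact in the topology of weak
convergence: every subsequence admits a weakly convergent sub-subsequence. -/
theorem sequentially_tight_precompact
    {X : Type*} [MetricSpace X] [MeasurableSpace X] [BorelSpace X]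
    (μ : ℕ → ProbabilityMeasure X)
    (htight : ∀ ε : ℝ, 0 < ε → ∃ K : ℝ → Set X,
      (∀ δ : ℝ, 0 < δ → IsCompact (K δ)) ∧
      (∀ δ : ℝ, 0 < δ →
        ENNReal.ofReal (1 - ε) ≤
          Filter.liminf (fun n => (μ n : Measure X) (Metric.thickening δ (K δ))) Filter.atTop) ∧
      IsComplete (closure (⋃ δ ∈ Set.Ioi (0 : ℝ), K δ))) :
    ∀ φ : ℕ → ℕ, StrictMono φ →
      ∃ ψ : ℕ → ℕ, StrictMono ψ ∧ ∃ ν : ProbabilityMeasure X,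
        Filter.Tendsto (fun j => μ (φ (ψ j))) Filter.atTop (𝓝 ν) := by
  intro φ hφ
  have hμ : IsAsymptoticallyTight (fun n => (μ n : Measure X)) :=
    IsSeqTight.isAsymptoticallyTight htight
  exact (hμ.comp_tendsto hφ.tendsto_atTop).exists_subseq_tendsto (μ := fun n => μ (φ n))
end

section
/- Let (X,d) be a metric space and let (μₙ)_{n∈ℕ} be a sequentially tight sequence of Borel probability measures on X which converges weakly to a Borel probability measure μ. Then μ is tight: for every ε > 0 there exists a compact set K ⊆ X with μ(K) ≥ 1 − ε. -/
open MeasureTheory Filter Topology Metric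

lemma isComplete_of_isClosed_subset {α : Type*} [UniformSpace α] {s t : Set α}
    (ht : IsComplete t) (hs : IsClosed s) (hst : s ⊆ t) : IsComplete s := by
  intro f hf hfs
  obtain ⟨x, _, hfx⟩ := ht f hf (hfs.trans (Filter.principal_mono.mpr hst))
  have hx : x ∈ closure s :=
    mem_closure_iff_clusterPt.mpr (hf.1.mono (le_inf hfx hfs))
  rw [hs.closure_eq] at hx
  exact ⟨x, hx, hfx⟩

/-- If a sequentially tight sequence of Borel probability measures on a metric
space converges weakly to `μ`, then `μ` is tight: for every `ε > 0` there is a compact set `K`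
with `μ(K) ≥ 1 - ε`. -/
theorem sequentially_tight_weak_limit_tight
    {X : Type*} [MetricSpace X] [MeasurableSpace X] [BorelSpace X]
    (μ : ℕ → ProbabilityMeasure X) (μlim : ProbabilityMeasure X)
    (htight : ∀ ε : ℝ, 0 < ε → ∃ K : ℝ → Set X,
      (∀ δ : ℝ, 0 < δ → IsCompact (K δ)) ∧
      (∀ δ : ℝ, 0 < δ →
        ENNReal.ofReal (1 - ε) ≤
          Filter.liminf (fun n => (μ n : Measure X) (Metric.thickening δ (K δ))) Filter.atTop) ∧
      IsComplete (closure (⋃ δ ∈ Set.Ioi (0 : ℝ), K δ)))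
    (hconv : Filter.Tendsto μ Filter.atTop (𝓝 μlim)) :
    ∀ ε : ℝ, 0 < ε → ∃ K : Set X, IsCompact K ∧
      ENNReal.ofReal (1 - ε) ≤ (μlim : Measure X) K := by
  intro ε hε
  set e : ℕ → ℝ := fun m => ε / 4 * (1 / 2) ^ m with he
  have hepos : ∀ m : ℕ, 0 < e m := fun m => by positivity
  choose K hKcomp hKliminf hKcomplete using fun m : ℕ => htight (e m) (hepos m)
  set δ : ℕ → ℝ := fun m => 1 / (m + 1) with hδ
  have hδpos : ∀ m : ℕ, 0 < δ m := fun m => by positivity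
  set C : ℕ → Set X := fun m => closure (⋃ d ∈ Set.Ioi (0 : ℝ), K m d) with hC
  have hKsubC : ∀ m (d : ℝ), 0 < d → K m d ⊆ C m := fun m d hd =>
    (Set.subset_biUnion_of_mem (show d ∈ Set.Ioi (0:ℝ) from hd)).trans subset_closure
  -- measure of closed thickenings under the limit measure
  have hcth : ∀ m (d : ℝ), 0 < d →
      ENNReal.ofReal (1 - e m) ≤ (μlim : Measure X) (cthickening d (K m d)) := by
    intro m d hd
    calc ENNReal.ofReal (1 - e m)
        ≤ liminf (fun n => (μ n : Measure X) (thickening d (K m d))) atTop :=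
          hKliminf m d hd
      _ ≤ limsup (fun n => (μ n : Measure X) (thickening d (K m d))) atTop :=
          liminf_le_limsup (by isBoundedDefault) (by isBoundedDefault)
      _ ≤ limsup (fun n => (μ n : Measure X) (cthickening d (K m d))) atTop := by
          exact limsup_le_limsup (Eventually.of_forall fun n =>
              measure_mono (thickening_subset_cthickening d (K m d)))
            (by isBoundedDefault) (by isBoundedDefault)
      _ ≤ (μlim : Measure X) (cthickening d (K m d)) :=
          ProbabilityMeasure.limsup_measure_closed_le_of_tendsto hconv isClosed_cthickening
  -- measure of the complete sets
  have hCmeas : ∀ m, ENNReal.ofReal (1 - e m) ≤ (μlim : Measure X) (C m) := by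
    intro m
    have tend : Tendsto (fun r => (μlim : Measure X) (cthickening r (C m))) (𝓝[>] 0)
        (𝓝 ((μlim : Measure X) (C m))) :=
      (tendsto_measure_cthickening_of_isClosed
        ⟨1, one_pos, measure_ne_top _ _⟩ isClosed_closure).mono_left nhdsWithin_le_nhds
    refine ge_of_tendsto tend ?_
    filter_upwards [self_mem_nhdsWithin] with d (hd : (0:ℝ) < d)
    exact (hcth m d hd).trans (measure_mono (cthickening_subset_of_subset d (hKsubC m d hd)))
  -- the compact set
  set S : ℕ → Set X := fun m => C m ∩ cthickening (δ m) (K m (δ m)) with hS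
  have hSclosed : ∀ m, IsClosed (S m) := fun m => isClosed_closure.inter isClosed_cthickening
  refine ⟨⋂ m, S m, ?_, ?_⟩
  · rw [isCompact_iff_totallyBounded_isComplete]
    constructor
    · rw [Metric.totallyBounded_iff]
      intro r hr
      obtain ⟨m, hm⟩ := exists_nat_one_div_lt (show (0:ℝ) < r / 2 from half_pos hr)
      obtain ⟨t, htfin, htcov⟩ := Metric.totallyBounded_iff.mp
        (hKcomp m (δ m) (hδpos m)).totallyBounded (r / 2) (half_pos hr)
      refine ⟨t, htfin, fun x hx => ?_⟩
      have hx1 : x ∈ cthickening (δ m) (K m (δ m)) :=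
        ((Set.iInter_subset S m).trans Set.inter_subset_right) hx
      have hx2 : x ∈ thickening (r / 2) (K m (δ m)) :=
        cthickening_subset_thickening' (half_pos hr) hm _ hx1
      obtain ⟨y, hyK, hdy⟩ := Metric.mem_thickening_iff.mp hx2
      obtain ⟨z, hz, hyz⟩ := Set.mem_iUnion₂.mp (htcov hyK)
      refine Set.mem_iUnion₂.mpr ⟨z, hz, ?_⟩
      rw [mem_ball] at hyz ⊢
      calc dist x z ≤ dist x y + dist y z := dist_triangle x y z
        _ < r / 2 + r / 2 := add_lt_add hdy hyz
        _ = r := add_halves r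
    · exact isComplete_of_isClosed_subset (hKcomplete 0)
        (isClosed_iInter hSclosed)
        ((Set.iInter_subset S 0).trans Set.inter_subset_left)
  · -- measure bound
    have hScompl : ∀ m, (μlim : Measure X) (S m)ᶜ ≤ ENNReal.ofReal (2 * e m) := by
      intro m
      have h1 : (μlim : Measure X) (C m)ᶜ ≤ ENNReal.ofReal (e m) := by
        rw [prob_compl_eq_one_sub isClosed_closure.measurableSet]
        refine tsub_le_iff_right.mpr ?_
        calc (1 : ENNReal) = ENNReal.ofReal ((1 - e m) + e m) := by norm_num
          _ ≤ ENNReal.ofReal (1 - e m) + ENNReal.ofReal (e m) := ENNReal.ofReal_add_le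
          _ ≤ (μlim : Measure X) (C m) + ENNReal.ofReal (e m) := by
              gcongr; exact hCmeas m
          _ = ENNReal.ofReal (e m) + (μlim : Measure X) (C m) := add_comm _ _
      have h2 : (μlim : Measure X) (cthickening (δ m) (K m (δ m)))ᶜ ≤ ENNReal.ofReal (e m) := by
        rw [prob_compl_eq_one_sub isClosed_cthickening.measurableSet]
        refine tsub_le_iff_right.mpr ?_
        calc (1 : ENNReal) = ENNReal.ofReal ((1 - e m) + e m) := by norm_num
          _ ≤ ENNReal.ofReal (1 - e m) + ENNReal.ofReal (e m) := ENNReal.ofReal_add_le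
          _ ≤ (μlim : Measure X) (cthickening (δ m) (K m (δ m))) + ENNReal.ofReal (e m) := by
              gcongr; exact hcth m (δ m) (hδpos m)
          _ = _ + _ := add_comm _ _
      calc (μlim : Measure X) (S m)ᶜ
          = (μlim : Measure X) ((C m)ᶜ ∪ (cthickening (δ m) (K m (δ m)))ᶜ) := by
            rw [hS]; rw [Set.compl_inter]
        _ ≤ (μlim : Measure X) (C m)ᶜ + (μlim : Measure X) (cthickening (δ m) (K m (δ m)))ᶜ :=
            measure_union_le _ _
        _ ≤ ENNReal.ofReal (e m) + ENNReal.ofReal (e m) := add_le_add h1 h2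
        _ = ENNReal.ofReal (2 * e m) := by
            rw [two_mul, ENNReal.ofReal_add (hepos m).le (hepos m).le]
    have hsum : ∑' m, ENNReal.ofReal (2 * e m) = ENNReal.ofReal ε := by
      rw [← ENNReal.ofReal_tsum_of_nonneg (fun m => by positivity)]
      · congr 1
        have : ∀ m : ℕ, 2 * e m = (ε / 2) * (1 / 2) ^ m := by
          intro m; rw [he]; ring
        simp_rw [this]
        rw [tsum_mul_left, tsum_geometric_of_lt_one (by norm_num) (by norm_num)]
        norm_num
      · have : Summable (fun m : ℕ => (ε / 2) * (1 / 2) ^ m) :=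
          (summable_geometric_of_lt_one (by norm_num) (by norm_num)).mul_left _
        refine this.congr fun m => by rw [he]; ring
    have hcompl : (μlim : Measure X) (⋂ m, S m)ᶜ ≤ ENNReal.ofReal ε := by
      rw [Set.compl_iInter]
      calc (μlim : Measure X) (⋃ m, (S m)ᶜ) ≤ ∑' m, (μlim : Measure X) (S m)ᶜ :=
            measure_iUnion_le _
        _ ≤ ∑' m, ENNReal.ofReal (2 * e m) := ENNReal.tsum_le_tsum hScompl
        _ = ENNReal.ofReal ε := hsum
    have hmeas : MeasurableSet (⋂ m, S m) := (isClosed_iInter hSclosed).measurableSet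
    have : (μlim : Measure X) (⋂ m, S m) = 1 - (μlim : Measure X) (⋂ m, S m)ᶜ := by
      rw [prob_compl_eq_one_sub hmeas, ENNReal.sub_sub_cancel ENNReal.one_ne_top prob_le_one]
    rw [this, ENNReal.ofReal_sub 1 hε.le, ENNReal.ofReal_one]
    exact tsub_le_tsub_left hcompl 1
end

section
/- Let (X,d) be a metric space and let (μₙ)_{n∈ℕ} be a sequence of Borel probability measures on X converging weakly to a Borel probability measure μ. If (μₙ)_{n∈ℕ} is sequentially tight along a family of compact sets (K^δ_ε)_{δ,ε>0}, then μ(K_ε) ≥ 1 − ε for every ε > 0, where K_ε = closure(⋃_{δ>0} K^δ_ε). -/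
set_option maxHeartbeats 1000000


open MeasureTheory Filter Topology Metric

/-- If `(μₙ)` converges weakly to `μ` and `(μₙ)` is sequentially tight along a
family of compact sets `(K^δ_ε)`, then `μ(K_ε) ≥ 1 - ε` for every `ε > 0`, where
`K_ε = closure (⋃_{δ>0} K^δ_ε)`. -/
theorem weak_limit_measure_ge_on_Keps
    {X : Type*} [MetricSpace X] [MeasurableSpace X] [BorelSpace X]
    (μ : ℕ → ProbabilityMeasure X) (μlim : ProbabilityMeasure X)
    (hconv : Filter.Tendsto μ Filter.atTop (𝓝 μlim))
    (K : ℝ → ℝ → Set X)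
    (hcompact : ∀ δ ε : ℝ, 0 < δ → 0 < ε → IsCompact (K δ ε))
    (hbound : ∀ ε : ℝ, 0 < ε → ∀ δ : ℝ, 0 < δ →
      ENNReal.ofReal (1 - ε) ≤
        Filter.liminf (fun n => (μ n : Measure X) (Metric.thickening δ (K δ ε))) Filter.atTop)
    (hcomplete : ∀ ε : ℝ, 0 < ε → IsComplete (closure (⋃ δ ∈ Set.Ioi (0 : ℝ), K δ ε))) :
    ∀ ε : ℝ, 0 < ε →
      ENNReal.ofReal (1 - ε) ≤ (μlim : Measure X) (closure (⋃ δ ∈ Set.Ioi (0 : ℝ), K δ ε)) := by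
  intro ε hε
  set S : Set X := ⋃ δ ∈ Set.Ioi (0 : ℝ), K δ ε with hS
  -- Step 1: for every δ > 0, μlim (cthickening δ S) ≥ 1 - ε
  have key : ∀ δ : ℝ, 0 < δ →
      ENNReal.ofReal (1 - ε) ≤ (μlim : Measure X) (cthickening δ S) := by
    intro δ hδ
    have h1 : ENNReal.ofReal (1 - ε) ≤
        Filter.limsup (fun n => (μ n : Measure X) (cthickening δ (K δ ε))) Filter.atTop := by
      refine le_trans (hbound ε hε δ hδ) ?_
      refine le_trans (liminf_le_limsup) ?_
      exact limsup_le_limsup (Filter.Eventually.of_forall fun n =>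
        measure_mono (thickening_subset_cthickening δ (K δ ε)))
    have h2 : Filter.limsup (fun n => (μ n : Measure X) (cthickening δ (K δ ε))) Filter.atTop
        ≤ (μlim : Measure X) (cthickening δ (K δ ε)) :=
      ProbabilityMeasure.limsup_measure_closed_le_of_tendsto hconv isClosed_cthickening
    have hsub : K δ ε ⊆ S := by
      intro x hx
      exact Set.mem_biUnion hδ hx
    have h3 : (μlim : Measure X) (cthickening δ (K δ ε)) ≤
        (μlim : Measure X) (cthickening δ S) := measure_mono (cthickening_subset_of_subset δ hsub)
    exact (h1.trans h2).trans h3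
  -- Step 2: take δ → 0
  have htend : Tendsto (fun δ => (μlim : Measure X) (cthickening δ S)) (𝓝[>] 0)
      (𝓝 ((μlim : Measure X) (closure S))) := by
    refine (tendsto_measure_cthickening ?_).mono_left nhdsWithin_le_nhds
    exact ⟨1, one_pos, measure_ne_top _ _⟩
  refine ge_of_tendsto htend ?_
  filter_upwards [self_mem_nhdsWithin] with δ hδ using key δ hδ
end

section
/- Let (X,d) be a metric space, γ : [0,1] → X a continuous curve, x ∈ X, 0 < r < R < ∞, and s, t ∈ [0,1]. If d(x, γ(s)) ≤ r and d(x, γ(t)) ≥ R, then there exist a, b ∈ [min(s,t), max(s,t)] with a < b such that (a,b) is an A_{r,R}(x)-crossing interval of γ. -/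
open Set Metric

/-- `(a, b)` is an `A_{r,R}(x)`-crossing interval of the curve `γ`: `a < b`,
`γ((a,b))` lies in the open annulus `{y | r < d(x,y) < R}`, and the distances of the two
endpoints to `x` are exactly `{r, R}`. -/
def IsCrossing {X : Type*} [MetricSpace X] (γ : ℝ → X) (x : X) (r R a b : ℝ) : Prop :=
  a < b ∧ (∀ t ∈ Set.Ioo a b, r < dist x (γ t) ∧ dist x (γ t) < R) ∧
    ({dist x (γ a), dist x (γ b)} : Set ℝ) = {r, R}

/-- The set `C^γ_{r,R}(x)` of all `A_{r,R}(x)`-crossing intervals of `γ : [0,1] → X`. -/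
def crossingSet {X : Type*} [MetricSpace X] (γ : ℝ → X) (x : X) (r R : ℝ) : Set (ℝ × ℝ) :=
  {p | 0 ≤ p.1 ∧ p.2 ≤ 1 ∧ IsCrossing γ x r R p.1 p.2}

/-- Helper: a continuous real function going from `≤ r` to `≥ R` on `[c,d]` has a
"last exit from `r` followed by first hit of `R`" crossing. -/
lemma crossing_aux (f : ℝ → ℝ) {c d r R : ℝ} (hcd : c ≤ d)
    (hf : ContinuousOn f (Set.Icc c d)) (hrR : r < R) (hc : f c ≤ r) (hd : R ≤ f d) :
    ∃ a b, c ≤ a ∧ a < b ∧ b ≤ d ∧ f a = r ∧ f b = R ∧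
      ∀ u ∈ Set.Ioo a b, r < f u ∧ f u < R := by
  -- the set where f = r
  set Sr : Set ℝ := Set.Icc c d ∩ f ⁻¹' {r} with hSr
  have hSrclosed : IsClosed Sr := hf.preimage_isClosed_of_isClosed isClosed_Icc isClosed_singleton
  have hSrne : Sr.Nonempty := by
    have : r ∈ Set.Icc (f c) (f d) := ⟨hc, le_trans hrR.le hd⟩
    obtain ⟨u, hu, hfu⟩ := intermediate_value_Icc hcd hf this
    exact ⟨u, hu, hfu⟩
  have hSrbdd : BddAbove Sr := (bddAbove_Icc.mono (Set.inter_subset_left))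
  set a := sSup Sr with ha_def
  have haS : a ∈ Sr := hSrclosed.csSup_mem hSrne hSrbdd
  have ha_mem : a ∈ Set.Icc c d := haS.1
  have hfa : f a = r := haS.2
  -- beyond a, f > r
  have hgt : ∀ u ∈ Set.Ioc a d, r < f u := by
    intro u hu
    by_contra h
    push_neg at h
    have hcu : c ≤ u := le_trans ha_mem.1 hu.1.le
    have hfcont : ContinuousOn f (Set.Icc u d) := hf.mono (Set.Icc_subset_Icc hcu le_rfl)
    have : r ∈ Set.Icc (f u) (f d) := ⟨h, le_trans hrR.le hd⟩
    obtain ⟨v, hv, hfv⟩ := intermediate_value_Icc hu.2 hfcont this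
    have hvS : v ∈ Sr := ⟨⟨le_trans hcu hv.1, hv.2⟩, hfv⟩
    have : v ≤ a := le_csSup hSrbdd hvS
    exact absurd (lt_of_lt_of_le hu.1 hv.1) (not_lt.mpr this)
  have had : a < d := lt_of_le_of_ne ha_mem.2 (by
    intro h; rw [h] at hfa; exact absurd hd (by rw [hfa]; exact not_le.mpr hrR))
  -- the set where f = R on [a,d]
  have hfad : ContinuousOn f (Set.Icc a d) := hf.mono (Set.Icc_subset_Icc ha_mem.1 le_rfl)
  set TR : Set ℝ := Set.Icc a d ∩ f ⁻¹' {R} with hTR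
  have hTRclosed : IsClosed TR :=
    hfad.preimage_isClosed_of_isClosed isClosed_Icc isClosed_singleton
  have hTRne : TR.Nonempty := by
    have : R ∈ Set.Icc (f a) (f d) := ⟨by rw [hfa]; exact hrR.le, hd⟩
    obtain ⟨u, hu, hfu⟩ := intermediate_value_Icc had.le hfad this
    exact ⟨u, hu, hfu⟩
  have hTRbdd : BddBelow TR := (bddBelow_Icc.mono (Set.inter_subset_left))
  set b := sInf TR with hb_def
  have hbT : b ∈ TR := hTRclosed.csInf_mem hTRne hTRbdd
  have hfb : f b = R := hbT.2
  have hab : a < b := lt_of_le_of_ne hbT.1.1 (by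
    intro h; rw [← h] at hfb; rw [hfa] at hfb; exact absurd hfb (ne_of_lt hrR))
  -- before b (and ≥ a), f < R
  have hlt : ∀ u ∈ Set.Ico a b, f u < R := by
    intro u hu
    by_contra h
    push_neg at h
    have hud : u ≤ d := le_trans hu.2.le hbT.1.2
    have hfcont : ContinuousOn f (Set.Icc a u) := hfad.mono (Set.Icc_subset_Icc le_rfl hud)
    have : R ∈ Set.Icc (f a) (f u) := ⟨by rw [hfa]; exact hrR.le, h⟩
    obtain ⟨v, hv, hfv⟩ := intermediate_value_Icc hu.1 hfcont this
    have hvT : v ∈ TR := ⟨⟨hv.1, le_trans hv.2 hud⟩, hfv⟩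
    have : b ≤ v := csInf_le hTRbdd hvT
    exact absurd (lt_of_le_of_lt hv.2 hu.2) (not_lt.mpr this)
  refine ⟨a, b, ha_mem.1, hab, hbT.1.2, hfa, hfb, fun u hu => ?_⟩
  exact ⟨hgt u ⟨hu.1, le_trans hu.2.le hbT.1.2⟩, hlt u ⟨hu.1.le, hu.2⟩⟩

/-- If `d(x, γ(s)) ≤ r` and `d(x, γ(t)) ≥ R` for some `s, t ∈ [0,1]`, then
there is an `A_{r,R}(x)`-crossing interval `(a, b)` of `γ` with
`min s t ≤ a < b ≤ max s t`. -/
theorem exists_crossing_between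
    {X : Type*} [MetricSpace X] (γ : ℝ → X) (hγ : ContinuousOn γ (Set.Icc 0 1))
    (x : X) (r R : ℝ) (hr : 0 < r) (hrR : r < R)
    (s t : ℝ) (hs : s ∈ Set.Icc (0 : ℝ) 1) (ht : t ∈ Set.Icc (0 : ℝ) 1)
    (hsr : dist x (γ s) ≤ r) (htR : R ≤ dist x (γ t)) :
    ∃ a b : ℝ, min s t ≤ a ∧ b ≤ max s t ∧ (a, b) ∈ crossingSet γ x r R := by
  set f : ℝ → ℝ := fun u => dist x (γ u) with hf_def
  have hf : ContinuousOn f (Set.Icc 0 1) :=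
    (continuous_const.dist continuous_id).comp_continuousOn hγ
  rcases le_total s t with hst | hts
  · -- s ≤ t : f s ≤ r, f t ≥ R
    have hsub : Set.Icc s t ⊆ Set.Icc (0:ℝ) 1 := Set.Icc_subset_Icc hs.1 ht.2
    obtain ⟨a, b, hca, hab, hbd, hfa, hfb, hmid⟩ :=
      crossing_aux f hst (hf.mono hsub) hrR hsr htR
    refine ⟨a, b, ?_, ?_, ?_, ?_, hab, hmid, ?_⟩
    · rw [min_eq_left hst]; exact hca
    · rw [max_eq_right hst]; exact hbd
    · exact le_trans hs.1 hca
    · exact le_trans hbd ht.2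
    · rw [show dist x (γ a) = f a from rfl, show dist x (γ b) = f b from rfl, hfa, hfb]
  · -- t ≤ s : run backwards using reflection
    set g : ℝ → ℝ := fun u => f (t + s - u) with hg_def
    have hmaps : ∀ u ∈ Set.Icc t s, t + s - u ∈ Set.Icc t s := by
      intro u hu
      constructor <;> [linarith [hu.2]; linarith [hu.1]]
    have hsub : Set.Icc t s ⊆ Set.Icc (0:ℝ) 1 := Set.Icc_subset_Icc ht.1 hs.2
    have hg : ContinuousOn g (Set.Icc t s) := by
      apply (hf.mono hsub).comp ((continuous_const.sub continuous_id).continuousOn)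
      intro u hu; exact hmaps u hu
    have hgt : g t = f s := by simp [hg_def]
    have hgs : g s = f t := by simp [hg_def]
    obtain ⟨a', b', hca, hab, hbd, hga, hgb, hmid⟩ :=
      crossing_aux g hts hg hrR (by rw [hgt]; exact hsr) (by rw [hgs]; exact htR)
    refine ⟨t + s - b', t + s - a', ?_, ?_, ?_, ?_, ?_, ?_, ?_⟩
    · rw [min_eq_right hts]; linarith
    · rw [max_eq_left hts]; linarith
    · show (0:ℝ) ≤ t + s - b'
      have := (hmaps b' ⟨le_trans hca hab.le, hbd⟩).1; linarith [ht.1]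
    · show t + s - a' ≤ (1:ℝ)
      have := (hmaps a' ⟨hca, le_trans hab.le hbd⟩).2; linarith [hs.2]
    · show t + s - b' < t + s - a'
      linarith
    · intro u hu
      obtain ⟨hu1, hu2⟩ := hu
      have hu1' : t + s - b' < u := hu1
      have hu2' : u < t + s - a' := hu2
      have hmem : t + s - u ∈ Set.Ioo a' b' := ⟨by linarith, by linarith⟩
      have h := hmid _ hmem
      have heq : g (t + s - u) = f u := by simp [hg_def]
      rw [heq] at h
      exact h
    · have e1 : dist x (γ (t + s - b')) = R := by
        have : g b' = f (t + s - b') := rfl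
        rw [this] at hgb; exact hgb
      have e2 : dist x (γ (t + s - a')) = r := by
        have : g a' = f (t + s - a') := rfl
        rw [this] at hga; exact hga
      show ({dist x (γ (t + s - b')), dist x (γ (t + s - a'))} : Set ℝ) = {r, R}
      rw [e1, e2, Set.pair_comm]
end

section
/- Let (X,d) be a metric space, γ : [0,1] → X a continuous curve, x ∈ X, 0 < r < R < ∞, and n ∈ ℕ. Then N^γ_{r,R}(x) ≤ n if and only if there exist time instances 0 = s₀ < s₁ < … < s_n < s_{n+1} = 1 such that for every j ∈ {0, 1, …, n} the restriction of γ to [s_j, s_{j+1}] does not cross A_{r,R}(x), i.e. has no A_{r,R}(x)-crossing interval. -/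
open Set Metric

/-!
An endpoint of a crossing interval lies on the boundary of the annulus while the interior of any
crossing interval lies in the open annulus, so distinct crossing intervals have disjoint
interiors. For a partition `0 = s₀ < … < s_{n+1} = 1`, a subinterval of `[0, 1]` fits in no
`[s_j, s_{j+1}]` iff one of the inner points `s₁, …, s_n` lies in its interior. A separating
partition therefore yields an injection of the crossings into `{1, …, n}`; conversely, at most
`n` crossings are separated by any partition whose inner points include their midpoints.
-/

section Crossing

variable {X : Type*} [MetricSpace X] {γ : ℝ → X} {x : X} {r R a b c d : ℝ}

lemma IsCrossing.dist_left_mem (h : IsCrossing γ x r R a b) :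
    dist x (γ a) ∈ ({r, R} : Set ℝ) :=
  h.2.2 ▸ mem_insert _ _

lemma IsCrossing.dist_right_mem (h : IsCrossing γ x r R a b) :
    dist x (γ b) ∈ ({r, R} : Set ℝ) :=
  h.2.2 ▸ mem_insert_of_mem _ rfl

lemma IsCrossing.dist_notMem (h : IsCrossing γ x r R a b) {t : ℝ} (ht : t ∈ Ioo a b) :
    dist x (γ t) ∉ ({r, R} : Set ℝ) := by
  obtain ⟨hr, hR⟩ := h.2.1 t ht
  simp only [mem_insert_iff, mem_singleton_iff]
  rintro (h | h) <;> linarith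

lemma IsCrossing.disjoint_Ioo (h₁ : IsCrossing γ x r R a b) (h₂ : IsCrossing γ x r R c d)
    (hne : (a, b) ≠ (c, d)) : Disjoint (Ioo a b) (Ioo c d) := by
  rw [Set.disjoint_left]
  rintro t ⟨hat, htb⟩ ⟨hct, htd⟩
  rcases lt_trichotomy a c with hac | rfl | hca
  · exact h₁.dist_notMem ⟨hac, hct.trans htb⟩ h₂.dist_left_mem
  · rcases lt_trichotomy b d with hbd | rfl | hdb
    · exact h₂.dist_notMem ⟨h₁.1, hbd⟩ h₁.dist_right_mem
    · exact hne rfl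
    · exact h₁.dist_notMem ⟨h₂.1, hdb⟩ h₂.dist_right_mem
  · exact h₂.dist_notMem ⟨hca, hat.trans htd⟩ h₁.dist_left_mem

lemma pairwiseDisjoint_crossingSet :
    (crossingSet γ x r R).PairwiseDisjoint fun p => Ioo p.1 p.2 :=
  fun _ hp _ hq hne => hp.2.2.disjoint_Ioo hq.2.2 hne

end Crossing

section Cuts

variable {s : ℕ → ℝ} {n : ℕ} {a b : ℝ}

lemma strictMonoOn_Iic_of_forall_le_lt_succ (hs : ∀ j ≤ n, s j < s (j + 1)) :
    StrictMonoOn s (Iic (n + 1)) :=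
  strictMonoOn_Iic_of_lt_succ fun j hj => hs j (by omega)

lemma not_exists_subset_Icc_iff_exists_mem_Ioo (hs : ∀ j ≤ n, s j < s (j + 1))
    (ha : s 0 ≤ a) (hab : a < b) (hb : b ≤ s (n + 1)) :
    (¬ ∃ j ≤ n, s j ≤ a ∧ b ≤ s (j + 1)) ↔ ∃ k ∈ Finset.Icc 1 n, s k ∈ Ioo a b := by
  have hmono := strictMonoOn_Iic_of_forall_le_lt_succ hs
  constructor
  · intro hsep
    have hex : ∃ k, b ≤ s k := ⟨n + 1, hb⟩
    set k := Nat.find hex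
    have hk : b ≤ s k := Nat.find_spec hex
    have hkn : k ≤ n + 1 := Nat.find_min' hex hb
    have hk0 : k ≠ 0 := fun h => by rw [h] at hk; linarith
    have hlt : s (k - 1) < b := not_le.mp (Nat.find_min hex (by omega))
    have hgt : a < s (k - 1) := not_le.mp fun h =>
      hsep ⟨k - 1, by omega, h, by rwa [Nat.sub_add_cancel (by omega)]⟩
    have hk1 : k ≠ 1 := fun h => by rw [h] at hgt; linarith
    exact ⟨k - 1, Finset.mem_Icc.mpr ⟨by omega, by omega⟩, hgt, hlt⟩
  · rintro ⟨k, hk, hak, hkb⟩ ⟨j, hj, hja, hbj⟩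
    obtain ⟨hk1, hkn⟩ := Finset.mem_Icc.mp hk
    have hjk : j < k := (hmono.lt_iff_lt (by simp; omega) (by simp; omega)).mp (hja.trans_lt hak)
    have hkj : k < j + 1 :=
      (hmono.lt_iff_lt (by simp; omega) (by simp; omega)).mp (hkb.trans_le hbj)
    omega

lemma encard_le_of_forall_exists_mem_Ioo {T : Set (ℝ × ℝ)}
    (hT : T.PairwiseDisjoint fun p => Ioo p.1 p.2)
    (hcut : ∀ p ∈ T, ∃ k ∈ Finset.Icc 1 n, s k ∈ Ioo p.1 p.2) : T.encard ≤ n := by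
  choose! f hf hfs using hcut
  have hinj : InjOn f T := fun p hp q hq hpq => by
    by_contra hne
    exact Set.disjoint_left.mp (hT hp hq hne) (hfs p hp) (hpq ▸ hfs q hq)
  calc T.encard ≤ (↑(Finset.Icc 1 n) : Set ℕ).encard :=
        encard_le_encard_of_injOn (fun p hp => hf p hp) hinj
    _ = n := by rw [encard_coe_eq_coe_finsetCard, Nat.card_Icc]; simp

lemma exists_partition_through_finset (n : ℕ) {b : ℝ} (hab : a < b) (M : Finset ℝ)
    (hM : ↑M ⊆ Ioo a b) (hcard : M.card ≤ n) :
    ∃ s : ℕ → ℝ, s 0 = a ∧ s (n + 1) = b ∧ (∀ j ≤ n, s j < s (j + 1)) ∧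
      ∀ m ∈ M, ∃ k ∈ Finset.Icc 1 n, s k = m := by
  induction n generalizing b M with
  | zero =>
    obtain rfl : M = ∅ := Finset.card_eq_zero.mp (Nat.le_zero.mp hcard)
    exact ⟨fun j => if j = 0 then a else b, by simp, by simp,
      fun j hj => by obtain rfl := Nat.le_zero.mp hj; simpa using hab, by simp⟩
  | succ n ih =>
    -- the last inner point `c` is the largest point of `M`, or any point if `M` is empty
    obtain ⟨c, ⟨hac, hcb⟩, hMc, hcard'⟩ : ∃ c ∈ Ioo a b, (∀ m ∈ M, m ≤ c) ∧
        (M.erase c).card ≤ n := by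
      rcases M.eq_empty_or_nonempty with rfl | hne
      · exact ⟨(a + b) / 2, ⟨by linarith, by linarith⟩, by simp, by simp⟩
      · refine ⟨M.max' hne, hM (M.max'_mem hne), M.le_max', ?_⟩
        rw [Finset.card_erase_of_mem (M.max'_mem hne)]
        omega
    have hM' : ↑(M.erase c) ⊆ Ioo a c := fun m hm => by
      obtain ⟨hmc, hm⟩ := Finset.mem_erase.mp hm
      exact ⟨(hM hm).1, (hMc m hm).lt_of_ne hmc⟩
    obtain ⟨s, hs0, hsn, hs, hsM⟩ := ih hac (M.erase c) hM' hcard'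
    refine ⟨Function.update s (n + 2) b, by simpa using hs0, by simp, fun j hj => ?_,
      fun m hm => ?_⟩
    · rcases (Nat.lt_or_eq_of_le hj) with hj | rfl
      · simpa [Function.update_of_ne (show j ≠ n + 2 by omega),
          Function.update_of_ne (show j + 1 ≠ n + 2 by omega)] using hs j (by omega)
      · simpa [hsn] using hcb
    · by_cases hmc : m = c
      · exact ⟨n + 1, by simp, by simp [hsn, hmc]⟩
      · obtain ⟨k, hk, hkm⟩ := hsM m (Finset.mem_erase.mpr ⟨hmc, hm⟩)
        obtain ⟨hk1, hkn⟩ := Finset.mem_Icc.mp hk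
        exact ⟨k, Finset.mem_Icc.mpr ⟨hk1, by omega⟩, by
          simpa [Function.update_of_ne (show k ≠ n + 2 by omega)] using hkm⟩

lemma exists_partition_forall_exists_mem_Ioo {T : Set (ℝ × ℝ)} (hab : a < b)
    (hT : ∀ p ∈ T, a ≤ p.1 ∧ p.1 < p.2 ∧ p.2 ≤ b) (hcard : T.encard ≤ n) :
    ∃ s : ℕ → ℝ, s 0 = a ∧ s (n + 1) = b ∧ (∀ j ≤ n, s j < s (j + 1)) ∧
      ∀ p ∈ T, ∃ k ∈ Finset.Icc 1 n, s k ∈ Ioo p.1 p.2 := by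
  have hmid : ∀ p ∈ T, (p.1 + p.2) / 2 ∈ Ioo p.1 p.2 := fun p hp => by
    obtain ⟨-, h, -⟩ := hT p hp
    constructor <;> linarith
  have hfin : T.Finite := finite_of_encard_le_coe hcard
  set M := (hfin.image fun p => (p.1 + p.2) / 2).toFinset
  have hM : ↑M ⊆ Ioo a b := by
    intro m hm
    obtain ⟨p, hp, rfl⟩ := Finite.mem_toFinset _ |>.mp (Finset.mem_coe.mp hm)
    obtain ⟨hap, -, hpb⟩ := hT p hp
    obtain ⟨h₁, h₂⟩ := hmid p hp
    exact ⟨hap.trans_lt h₁, h₂.trans_le hpb⟩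
  have hMcard : M.card ≤ n := by
    have := (encard_image_le (fun p : ℝ × ℝ => (p.1 + p.2) / 2) T).trans hcard
    rwa [Finite.encard_eq_coe_toFinset_card, Nat.cast_le] at this
  obtain ⟨s, hs0, hsn, hs, hsM⟩ := exists_partition_through_finset n hab M hM hMcard
  refine ⟨s, hs0, hsn, hs, fun p hp => ?_⟩
  obtain ⟨k, hk, hkp⟩ := hsM _ (Finite.mem_toFinset _ |>.mpr ⟨p, hp, rfl⟩)
  exact ⟨k, hk, hkp ▸ hmid p hp⟩

end Cuts

lemma forall_not_crossing_between_iff {X : Type*} [MetricSpace X] {γ : ℝ → X} {x : X}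
    {r R : ℝ} {s : ℕ → ℝ} {n : ℕ} (hs0 : s 0 = 0) (hsn : s (n + 1) = 1)
    (hs : ∀ j ≤ n, s j < s (j + 1)) :
    (∀ j ≤ n, ¬ ∃ a b : ℝ, s j ≤ a ∧ b ≤ s (j + 1) ∧ IsCrossing γ x r R a b) ↔
      ∀ p ∈ crossingSet γ x r R, ∃ k ∈ Finset.Icc 1 n, s k ∈ Ioo p.1 p.2 := by
  have hmono := (strictMonoOn_Iic_of_forall_le_lt_succ hs).monotoneOn
  constructor
  · rintro hsep p ⟨hp0, hp1, hp⟩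
    refine (not_exists_subset_Icc_iff_exists_mem_Ioo hs (hs0 ▸ hp0) hp.1 (hsn ▸ hp1)).mp ?_
    rintro ⟨j, hj, hja, hbj⟩
    exact hsep j hj ⟨p.1, p.2, hja, hbj, hp⟩
  · rintro hcut j hj ⟨a, b, hja, hbj, hab⟩
    have h0a : 0 ≤ a := hs0 ▸ (hmono (by simp) (by simp; omega) (Nat.zero_le j)).trans hja
    have hb1 : b ≤ 1 := hsn ▸ hbj.trans (hmono (by simp; omega) (by simp) (by omega))
    exact (not_exists_subset_Icc_iff_exists_mem_Ioo hs (hs0 ▸ h0a) hab.1 (hsn ▸ hb1)).mpr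
      (hcut (a, b) ⟨h0a, hb1, hab⟩) ⟨j, hj, hja, hbj⟩

theorem crossing_count_le_iff_separating_sequence_general
    {X : Type*} [MetricSpace X] (γ : ℝ → X)
    (x : X) (r R : ℝ) (n : ℕ) :
    (crossingSet γ x r R).encard ≤ (n : ℕ∞) ↔
      ∃ s : ℕ → ℝ, s 0 = 0 ∧ s (n + 1) = 1 ∧ (∀ j ≤ n, s j < s (j + 1)) ∧
        ∀ j ≤ n, ¬ ∃ a b : ℝ, s j ≤ a ∧ b ≤ s (j + 1) ∧ IsCrossing γ x r R a b := by
  constructor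
  · intro hcard
    obtain ⟨s, hs0, hsn, hs, hcut⟩ := exists_partition_forall_exists_mem_Ioo one_pos
      (fun p hp => ⟨hp.1, hp.2.2.1, hp.2.1⟩) hcard
    exact ⟨s, hs0, hsn, hs, (forall_not_crossing_between_iff hs0 hsn hs).mpr hcut⟩
  · rintro ⟨s, hs0, hsn, hs, hsep⟩
    exact encard_le_of_forall_exists_mem_Ioo pairwiseDisjoint_crossingSet
      ((forall_not_crossing_between_iff hs0 hsn hs).mp hsep)

/-- `N^γ_{r,R}(x) ≤ n` holds if and only if there are time instances
`0 = s₀ < s₁ < … < s_n < s_{n+1} = 1` such that for every `j ≤ n` the restriction of `γ` to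
`[s_j, s_{j+1}]` has no `A_{r,R}(x)`-crossing interval. -/
theorem crossing_count_le_iff_separating_sequence
    {X : Type*} [MetricSpace X] (γ : ℝ → X) (hγ : ContinuousOn γ (Set.Icc 0 1))
    (x : X) (r R : ℝ) (hr : 0 < r) (hrR : r < R) (n : ℕ) :
    (crossingSet γ x r R).encard ≤ (n : ℕ∞) ↔
      ∃ s : ℕ → ℝ, s 0 = 0 ∧ s (n + 1) = 1 ∧ (∀ j ≤ n, s j < s (j + 1)) ∧
        ∀ j ≤ n, ¬ ∃ a b : ℝ, s j ≤ a ∧ b ≤ s (j + 1) ∧ IsCrossing γ x r R a b :=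
  crossing_count_le_iff_separating_sequence_general γ x r R n
end

section
/- Let (X,d) be a metric space, γ : [0,1] → X a continuous curve, x ∈ X and 0 < r < R < ∞. Then there exists δ > 0 such that every continuous curve γ' : [0,1] → X with sup_{t∈[0,1]} d(γ(t), γ'(t)) < δ satisfies N^{γ'}_{r,R}(x) ≤ N^γ_{r,R}(x); i.e. the annulus-crossing count is upper semicontinuous with respect to the uniform metric on curves. -/
open Set Metric

/-- Unpack the unordered endpoint-value condition. -/
lemma pair_eq_cases {c d r R : ℝ} (hrR : r ≠ R) (h : ({c, d} : Set ℝ) = {r, R}) :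
    (c = r ∧ d = R) ∨ (c = R ∧ d = r) := by
  have hc : c ∈ ({r, R} : Set ℝ) := h ▸ Set.mem_insert _ _
  have hd : d ∈ ({r, R} : Set ℝ) := h ▸ Set.mem_insert_iff.2 (Or.inr rfl)
  have hr : r ∈ ({c, d} : Set ℝ) := h.symm ▸ Set.mem_insert _ _
  have hR : R ∈ ({c, d} : Set ℝ) := h.symm ▸ Set.mem_insert_iff.2 (Or.inr rfl)
  simp only [Set.mem_insert_iff, Set.mem_singleton_iff] at hc hd hr hR
  rcases hc with hc | hc <;> rcases hd with hd | hd <;> tauto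

/-- The endpoint distance-value of a crossing belongs to `{r, R}`. -/
lemma crossing_fst_val {X : Type*} [MetricSpace X] {γ : ℝ → X} {x : X} {r R a b : ℝ}
    (h : IsCrossing γ x r R a b) :
    dist x (γ a) = r ∨ dist x (γ a) = R := by
  have : dist x (γ a) ∈ ({r, R} : Set ℝ) := h.2.2 ▸ Set.mem_insert _ _
  simpa using this

lemma crossing_snd_val {X : Type*} [MetricSpace X] {γ : ℝ → X} {x : X} {r R a b : ℝ}
    (h : IsCrossing γ x r R a b) :
    dist x (γ b) = r ∨ dist x (γ b) = R := by
  have : dist x (γ b) ∈ ({r, R} : Set ℝ) :=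
    h.2.2 ▸ Set.mem_insert_iff.2 (Or.inr rfl)
  simpa using this

/-- Two crossings of the same curve do not overlap. -/
lemma crossing_nonoverlap {X : Type*} [MetricSpace X] {γ : ℝ → X} {x : X} {r R a b c d : ℝ}
    (h1 : IsCrossing γ x r R a b) (h2 : IsCrossing γ x r R c d) (hac : a < c) :
    b ≤ c := by
  by_contra hcb
  push_neg at hcb
  have hmem : c ∈ Set.Ioo a b := ⟨hac, hcb⟩
  have hint := h1.2.1 c hmem
  rcases crossing_fst_val h2 with h | h <;> rw [h] at hint <;>
    exact absurd hint (by simp [lt_irrefl])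

/-- Two crossings of the same curve with the same left endpoint coincide. -/
lemma crossing_fst_inj {X : Type*} [MetricSpace X] {γ : ℝ → X} {x : X} {r R a b d : ℝ}
    (h1 : IsCrossing γ x r R a b) (h2 : IsCrossing γ x r R a d) :
    b = d := by
  rcases lt_trichotomy b d with h | h | h
  · have hmem : b ∈ Set.Ioo a d := ⟨h1.1, h⟩
    have hint := h2.2.1 b hmem
    rcases crossing_snd_val h1 with hv | hv <;> rw [hv] at hint <;>
      exact absurd hint (by simp [lt_irrefl])
  · exact h
  · have hmem : d ∈ Set.Ioo a b := ⟨h2.1, h⟩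
    have hint := h1.2.1 d hmem
    rcases crossing_snd_val h2 with hv | hv <;> rw [hv] at hint <;>
      exact absurd hint (by simp [lt_irrefl])

/-- IVT extraction: if a continuous function takes the distinct values `v` and `w` at the
ends of `[s, t]`, then some subinterval `(a, b)` is a strict "crossing" from `v` to `w`. -/
lemma exists_extract (F : ℝ → ℝ) (hF : Continuous F) {s t v w : ℝ}
    (hst : s ≤ t) (hv : F s = v) (hw : F t = w) (hvw : v ≠ w) :
    ∃ a b, s ≤ a ∧ a < b ∧ b ≤ t ∧ F a = v ∧ F b = w ∧
      ∀ u ∈ Set.Ioo a b, min v w < F u ∧ F u < max v w := by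
  set Sb : Set ℝ := Icc s t ∩ F ⁻¹' {w} with hSb
  have hSbc : IsClosed Sb := isClosed_Icc.inter (isClosed_singleton.preimage hF)
  have hSbne : Sb.Nonempty := ⟨t, ⟨⟨hst, le_refl t⟩, hw⟩⟩
  have hSbbdd : BddBelow Sb := ⟨s, fun z hz => hz.1.1⟩
  set b := sInf Sb with hbdef
  have hbmem : b ∈ Sb := hSbc.csInf_mem hSbne hSbbdd
  have hbIcc : b ∈ Icc s t := hbmem.1
  have hFb : F b = w := hbmem.2
  have hbmin : ∀ z ∈ Icc s t, F z = w → b ≤ z := fun z hz hfz => csInf_le hSbbdd ⟨hz, hfz⟩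
  set Sa : Set ℝ := Icc s b ∩ F ⁻¹' {v} with hSa
  have hSac : IsClosed Sa := isClosed_Icc.inter (isClosed_singleton.preimage hF)
  have hSane : Sa.Nonempty := ⟨s, ⟨⟨le_refl s, hbIcc.1⟩, hv⟩⟩
  have hSabdd : BddAbove Sa := ⟨b, fun z hz => hz.1.2⟩
  set a := sSup Sa with hadef
  have hamem : a ∈ Sa := hSac.csSup_mem hSane hSabdd
  have haIcc : a ∈ Icc s b := hamem.1
  have hFa : F a = v := hamem.2
  have hamax : ∀ z ∈ Icc s b, F z = v → z ≤ a := fun z hz hfz => le_csSup hSabdd ⟨hz, hfz⟩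
  have hab : a < b := by
    rcases lt_or_eq_of_le haIcc.2 with h | h
    · exact h
    · exact absurd (hFa.symm.trans (h ▸ hFb)) hvw
  refine ⟨a, b, haIcc.1, hab, hbIcc.2, hFa, hFb, fun u hu => ?_⟩
  have hua : a < u := hu.1
  have hub : u < b := hu.2
  have husIcc : u ∈ Icc s t := ⟨haIcc.1.trans hua.le, hub.le.trans hbIcc.2⟩
  have hFune_v : F u ≠ v := fun h =>
    absurd (hamax u ⟨husIcc.1, hub.le⟩ h) (not_le.2 hua)
  have hFune_w : F u ≠ w := fun h =>
    absurd (hbmin u husIcc h) (not_le.2 hub)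
  constructor
  · by_contra hle
    push_neg at hle
    have hltv : F u < v := lt_of_le_of_ne (hle.trans (min_le_left v w)) hFune_v
    have hltw : F u < w := lt_of_le_of_ne (hle.trans (min_le_right v w)) hFune_w
    rcases hvw.lt_or_gt with hvw' | hvw'
    · -- v < w : find z ∈ [u, b] with F z = v
      have : v ∈ Icc (F u) (F b) := ⟨hltv.le, hFb ▸ hvw'.le⟩
      obtain ⟨z, hz, hFz⟩ := intermediate_value_Icc hub.le hF.continuousOn this
      have : z ≤ a := hamax z ⟨haIcc.1.trans (hua.le.trans hz.1), hz.2⟩ hFz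
      linarith [hz.1]
    · -- w < v : find z ∈ [s, u] with F z = w
      have : w ∈ Icc (F u) (F s) := ⟨hltw.le, hv ▸ hvw'.le⟩
      obtain ⟨z, hz, hFz⟩ := intermediate_value_Icc' husIcc.1 hF.continuousOn this
      have : b ≤ z := hbmin z ⟨hz.1, hz.2.trans husIcc.2⟩ hFz
      linarith [hz.2]
  · by_contra hle
    push_neg at hle
    have hgtv : v < F u := lt_of_le_of_ne ((le_max_left v w).trans hle) (Ne.symm hFune_v)
    have hgtw : w < F u := lt_of_le_of_ne ((le_max_right v w).trans hle) (Ne.symm hFune_w)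
    rcases hvw.lt_or_gt with hvw' | hvw'
    · -- v < w : find z ∈ [s, u] with F z = w
      have : w ∈ Icc (F s) (F u) := ⟨hv ▸ hvw'.le, hgtw.le⟩
      obtain ⟨z, hz, hFz⟩ := intermediate_value_Icc husIcc.1 hF.continuousOn this
      have : b ≤ z := hbmin z ⟨hz.1, hz.2.trans husIcc.2⟩ hFz
      linarith [hz.2]
    · -- w < v : find z ∈ [u, b] with F z = v
      have : v ∈ Icc (F b) (F u) := ⟨hFb ▸ hvw'.le, hgtv.le⟩
      obtain ⟨z, hz, hFz⟩ := intermediate_value_Icc' hub.le hF.continuousOn this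
      have : z ≤ a := hamax z ⟨haIcc.1.trans (hua.le.trans hz.1), hz.2⟩ hFz
      linarith [hz.1]

/-- The annulus-crossing count is upper semicontinuous with respect to the
uniform metric: there is `δ > 0` such that every continuous curve `γ'` uniformly `δ`-close to
`γ` on `[0,1]` satisfies `N^{γ'}_{r,R}(x) ≤ N^γ_{r,R}(x)`. -/
theorem crossing_count_upper_semicontinuous
    {X : Type*} [MetricSpace X] (γ : ℝ → X) (hγ : ContinuousOn γ (Set.Icc 0 1))
    (x : X) (r R : ℝ) (hr : 0 < r) (hrR : r < R) :
    ∃ δ : ℝ, 0 < δ ∧ ∀ γ' : ℝ → X, ContinuousOn γ' (Set.Icc 0 1) →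
      (∀ t ∈ Set.Icc (0 : ℝ) 1, dist (γ t) (γ' t) < δ) →
      (crossingSet γ' x r R).encard ≤ (crossingSet γ x r R).encard := by
  classical
  set S := crossingSet γ x r R with hSdef
  by_cases htop : S.encard = ⊤
  · exact ⟨1, one_pos, fun γ' _ _ => htop ▸ le_top⟩
  obtain ⟨N, hN⟩ : ∃ n : ℕ, S.encard = (n : ℕ∞) := ⟨S.encard.toNat, (ENat.coe_toNat htop).symm⟩
  set k := N + 1 with hkdef
  -- the continuous extension of `t ↦ dist x (γ t)`
  set F : ℝ → ℝ := fun u => dist x (γ (projIcc (0 : ℝ) 1 zero_le_one u)) with hFdef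
  have hproj : ∀ u : ℝ, ((projIcc (0 : ℝ) 1 zero_le_one u : ↥(Icc (0:ℝ) 1)) : ℝ) ∈ Icc (0:ℝ) 1 :=
    fun u => (projIcc (0 : ℝ) 1 zero_le_one u).2
  have hFc : Continuous F := by
    apply Continuous.dist continuous_const
    exact hγ.comp_continuous (continuous_subtype_val.comp continuous_projIcc) hproj
  have hFeq : ∀ u ∈ Icc (0:ℝ) 1, F u = dist x (γ u) := by
    intro u hu
    simp [hFdef, projIcc_of_mem zero_le_one hu]
  -- the defect function
  set h : ℝ × ℝ → ℝ := fun q =>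
    min (max |F q.1 - r| |F q.2 - R|) (max |F q.1 - R| |F q.2 - r|) with hhdef
  have hhc : Continuous h := by
    apply Continuous.min <;> apply Continuous.max <;>
      · apply Continuous.abs
        apply Continuous.sub _ continuous_const
        first
          | exact hFc.comp continuous_fst
          | exact hFc.comp continuous_snd
  have hh0 : ∀ q, 0 ≤ h q :=
    fun q => le_min (le_max_of_le_left (abs_nonneg _)) (le_max_of_le_left (abs_nonneg _))
  -- the compact domain of ordered tuples
  set D : Set (Fin k → ℝ × ℝ) :=
    (Set.univ.pi fun _ => Icc (0:ℝ) 1 ×ˢ Icc (0:ℝ) 1) ∩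
      ((⋂ i, {p | (p i).1 ≤ (p i).2}) ∩
        ⋂ i, ⋂ j, ⋂ (_ : i < j), {p | (p i).2 ≤ (p j).1}) with hDdef
  have hDc : IsCompact D := by
    apply IsCompact.inter_right (isCompact_univ_pi fun _ => isCompact_Icc.prod isCompact_Icc)
    apply IsClosed.inter
    · exact isClosed_iInter fun i =>
        isClosed_le ((continuous_apply i).fst) ((continuous_apply i).snd)
    · exact isClosed_iInter fun i => isClosed_iInter fun j => isClosed_iInter fun _ =>
        isClosed_le ((continuous_apply i).snd) ((continuous_apply j).fst)
  have hDne : D.Nonempty := by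
    refine ⟨fun _ => (0, 0), ?_⟩
    constructor
    · intro i _
      exact ⟨⟨le_refl 0, zero_le_one⟩, ⟨le_refl 0, zero_le_one⟩⟩
    · constructor
      · simp only [Set.mem_iInter, Set.mem_setOf_eq]
        intro i
        exact le_refl 0
      · simp only [Set.mem_iInter, Set.mem_setOf_eq]
        intro i j hij
        exact le_refl 0
  set G : (Fin k → ℝ × ℝ) → ℝ := fun p => ∑ i, h (p i) with hGdef
  have hGc : Continuous G := continuous_finset_sum _ fun i _ => hhc.comp (continuous_apply i)
  -- membership extraction from D
  have hDmem : ∀ p ∈ D, (∀ i : Fin k, (p i).1 ∈ Icc (0:ℝ) 1 ∧ (p i).2 ∈ Icc (0:ℝ) 1 ∧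
      (p i).1 ≤ (p i).2) ∧ ∀ i j : Fin k, i < j → (p i).2 ≤ (p j).1 := by
    intro p hp
    obtain ⟨h1, h2, h3⟩ := hp
    refine ⟨fun i => ?_, fun i j hij => ?_⟩
    · have := h1 i (Set.mem_univ i)
      exact ⟨this.1, this.2, Set.mem_iInter.1 h2 i⟩
    · exact Set.mem_iInter.1 (Set.mem_iInter.1 (Set.mem_iInter.1 h3 i) j) hij
  -- positivity of G on D (via the extraction lemma)
  have hGpos : ∀ p ∈ D, 0 < G p := by
    intro p hp
    obtain ⟨hco, hord⟩ := hDmem p hp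
    by_contra hle
    push_neg at hle
    have hzero : ∀ i : Fin k, h (p i) = 0 := by
      have hsum0 : G p = 0 := le_antisymm hle (Finset.sum_nonneg fun i _ => hh0 _)
      have := (Finset.sum_eq_zero_iff_of_nonneg (fun i _ => hh0 (p i))).1 hsum0
      exact fun i => this i (Finset.mem_univ i)
    -- for each i, extract a crossing of γ inside [(p i).1, (p i).2]
    have hcross : ∀ i : Fin k, ∃ c : ℝ × ℝ, c ∈ S ∧ (p i).1 ≤ c.1 ∧ c.2 ≤ (p i).2 := by
      intro i
      obtain ⟨hs, ht, hst⟩ := hco i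
      have hz := hzero i
      have hpair : (F (p i).1 = r ∧ F (p i).2 = R) ∨ (F (p i).1 = R ∧ F (p i).2 = r) := by
        rcases min_eq_iff.1 hz with ⟨hmax, -⟩ | ⟨hmax, -⟩
        · left
          have h1 : |F (p i).1 - r| = 0 := le_antisymm (hmax ▸ le_max_left _ _) (abs_nonneg _)
          have h2 : |F (p i).2 - R| = 0 := le_antisymm (hmax ▸ le_max_right _ _) (abs_nonneg _)
          constructor <;> [skip; skip] <;>
            · rw [abs_eq_zero, sub_eq_zero] at h1 h2
              first | exact h1 | exact h2
        · right
          have h1 : |F (p i).1 - R| = 0 := le_antisymm (hmax ▸ le_max_left _ _) (abs_nonneg _)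
          have h2 : |F (p i).2 - r| = 0 := le_antisymm (hmax ▸ le_max_right _ _) (abs_nonneg _)
          constructor <;> [skip; skip] <;>
            · rw [abs_eq_zero, sub_eq_zero] at h1 h2
              first | exact h1 | exact h2
      rcases hpair with ⟨hv, hw⟩ | ⟨hv, hw⟩
      · obtain ⟨a, b, hsa, hab, hbt, hFa, hFb, hint⟩ :=
          exists_extract F hFc hst hv hw hrR.ne
        have haI : a ∈ Icc (0:ℝ) 1 := ⟨hs.1.trans hsa, (hab.le.trans hbt).trans ht.2⟩
        have hbI : b ∈ Icc (0:ℝ) 1 := ⟨hs.1.trans (hsa.trans hab.le), hbt.trans ht.2⟩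
        refine ⟨(a, b), ⟨haI.1, hbI.2, hab, fun u hu => ?_, ?_⟩, hsa, hbt⟩
        · have huI : u ∈ Icc (0:ℝ) 1 := ⟨haI.1.trans hu.1.le, hu.2.le.trans hbI.2⟩
          have := hint u hu
          rw [hFeq u huI] at this
          rw [min_eq_left hrR.le, max_eq_right hrR.le] at this
          exact this
        · rw [← hFeq a haI, ← hFeq b hbI, hFa, hFb]
      · obtain ⟨a, b, hsa, hab, hbt, hFa, hFb, hint⟩ :=
          exists_extract F hFc hst hv hw hrR.ne'
        have haI : a ∈ Icc (0:ℝ) 1 := ⟨hs.1.trans hsa, (hab.le.trans hbt).trans ht.2⟩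
        have hbI : b ∈ Icc (0:ℝ) 1 := ⟨hs.1.trans (hsa.trans hab.le), hbt.trans ht.2⟩
        refine ⟨(a, b), ⟨haI.1, hbI.2, hab, fun u hu => ?_, ?_⟩, hsa, hbt⟩
        · have huI : u ∈ Icc (0:ℝ) 1 := ⟨haI.1.trans hu.1.le, hu.2.le.trans hbI.2⟩
          have := hint u hu
          rw [hFeq u huI] at this
          rw [min_eq_right hrR.le, max_eq_left hrR.le] at this
          exact this
        · rw [← hFeq a haI, ← hFeq b hbI, hFa, hFb, Set.pair_comm]
    choose c hcS hcl hcr using hcross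
    -- c is injective
    have hcmono : ∀ i j : Fin k, i < j → (c i).1 < (c j).1 := by
      intro i j hlt
      have h1 : (c i).1 < (c i).2 := (hcS i).2.2.1
      have h2 := hcr i
      have h3 := hord i j hlt
      have h4 := hcl j
      linarith
    have hcinj : Function.Injective c := by
      intro i j hij
      by_contra hne
      rcases Ne.lt_or_gt hne with hlt | hlt
      · exact absurd (congrArg Prod.fst hij) (hcmono i j hlt).ne
      · exact absurd (congrArg Prod.fst hij).symm (hcmono j i hlt).ne
    have : (k : ℕ∞) ≤ S.encard := by
      calc (k : ℕ∞) = (Set.univ : Set (Fin k)).encard := by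
            simp [Set.encard_univ]
        _ = (c '' Set.univ).encard := (hcinj.injOn.encard_image).symm
        _ ≤ S.encard := Set.encard_mono (by rintro q ⟨i, -, rfl⟩; exact hcS i)
    rw [hN] at this
    exact absurd (Nat.cast_le.1 this) (by omega)
  obtain ⟨p₀, hp₀D, hp₀min⟩ := hDc.exists_isMinOn hDne hGc.continuousOn
  set δ₀ := G p₀ with hδ₀def
  have hδ₀pos : 0 < δ₀ := hGpos p₀ hp₀D
  refine ⟨δ₀ / (2 * k), by positivity, fun γ' hγ' hclose => ?_⟩
  by_contra hgt
  push_neg at hgt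
  have hkle : (k : ℕ∞) ≤ (crossingSet γ' x r R).encard := by
    have : S.encard < (crossingSet γ' x r R).encard := hgt
    rw [hN] at this
    exact Order.add_one_le_of_lt (by exact_mod_cast this)
  obtain ⟨T, hTsub, hTcard⟩ := Set.exists_subset_encard_eq hkle
  have hTfin : T.Finite := Set.finite_of_encard_eq_coe hTcard
  set Ft := hTfin.toFinset with hFtdef
  have hFtcard : Ft.card = k := by
    have := hTfin.encard_eq_coe_toFinset_card
    rw [hTcard] at this
    exact_mod_cast this.symm
  have hFtmem : ∀ q ∈ Ft, q ∈ crossingSet γ' x r R := fun q hq =>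
    hTsub (hTfin.mem_toFinset.1 hq)
  -- fst is injective on Ft
  have hinjOn : Set.InjOn Prod.fst (Ft : Set (ℝ × ℝ)) := by
    intro q1 hq1 q2 hq2 hEq
    have hc1 := (hFtmem q1 (by exact_mod_cast hq1)).2.2
    have hc2 := (hFtmem q2 (by exact_mod_cast hq2)).2.2
    have : q1.2 = q2.2 := crossing_fst_inj hc1 (hEq ▸ hc2)
    exact Prod.ext hEq this
  set A := Ft.image Prod.fst with hAdef
  have hAcard : A.card = k := by rw [hAdef, Finset.card_image_of_injOn hinjOn, hFtcard]
  set e := A.orderIsoOfFin hAcard with hedef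
  have hchoice : ∀ i : Fin k, ∃ q ∈ Ft, q.1 = (e i : ℝ) := by
    intro i
    have : (e i : ℝ) ∈ A := (e i).2
    obtain ⟨q, hq, hq1⟩ := Finset.mem_image.1 this
    exact ⟨q, hq, hq1⟩
  choose q hqFt hq1 using hchoice
  have hqcross : ∀ i, q i ∈ crossingSet γ' x r R := fun i => hFtmem _ (hqFt i)
  have hqmono : ∀ i j : Fin k, i < j → (q i).1 < (q j).1 := by
    intro i j hij
    rw [hq1 i, hq1 j]
    exact_mod_cast (OrderIso.lt_iff_lt e).2 hij
  set p : Fin k → ℝ × ℝ := q with hpdef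
  have hpD : p ∈ D := by
    refine ⟨fun i _ => ?_, Set.mem_iInter.2 fun i => ?_,
      Set.mem_iInter.2 fun i => Set.mem_iInter.2 fun j => Set.mem_iInter.2 fun hij => ?_⟩
    · obtain ⟨h0, h1, hab, -, -⟩ := hqcross i
      exact ⟨⟨h0, (hab.le.trans h1)⟩, ⟨h0.trans hab.le, h1⟩⟩
    · exact (hqcross i).2.2.1.le
    · exact crossing_nonoverlap (hqcross i).2.2 (hqcross j).2.2 (hqmono i j hij)
  -- each defect is small
  have hsmall : ∀ i : Fin k, h (p i) ≤ δ₀ / (2 * k) := by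
    intro i
    obtain ⟨h0, h1, hab, -, hset⟩ := hqcross i
    have haI : (q i).1 ∈ Icc (0:ℝ) 1 := ⟨h0, hab.le.trans h1⟩
    have hbI : (q i).2 ∈ Icc (0:ℝ) 1 := ⟨h0.trans hab.le, h1⟩
    have hda : |F (q i).1 - dist x (γ' (q i).1)| ≤ dist (γ (q i).1) (γ' (q i).1) := by
      rw [hFeq _ haI, dist_comm x, dist_comm x]
      exact abs_dist_sub_le _ _ _
    have hdb : |F (q i).2 - dist x (γ' (q i).2)| ≤ dist (γ (q i).2) (γ' (q i).2) := by
      rw [hFeq _ hbI, dist_comm x, dist_comm x]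
      exact abs_dist_sub_le _ _ _
    have hca := hclose _ haI
    have hcb := hclose _ hbI
    rcases pair_eq_cases hrR.ne hset with ⟨hva, hvb⟩ | ⟨hva, hvb⟩
    · refine (min_le_left _ _).trans (max_le ?_ ?_)
      · rw [← hva]; linarith [abs_nonneg (F (q i).1 - dist x (γ' (q i).1))]
      · rw [← hvb]; linarith
    · refine (min_le_right _ _).trans (max_le ?_ ?_)
      · rw [← hva]; linarith
      · rw [← hvb]; linarith
  have hGle : G p ≤ (k : ℝ) * (δ₀ / (2 * k)) := by
    calc G p ≤ (Finset.univ : Finset (Fin k)).card • (δ₀ / (2 * k)) :=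
          Finset.sum_le_card_nsmul _ _ _ fun i _ => hsmall i
      _ = (k : ℝ) * (δ₀ / (2 * k)) := by
          simp [nsmul_eq_mul]
  have hGge : δ₀ ≤ G p := hp₀min hpD
  have hkpos : (0:ℝ) < k := by positivity
  have : (k : ℝ) * (δ₀ / (2 * k)) = δ₀ / 2 := by field_simp
  linarith
end
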